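/- Let (f,p) : (F,A)_G → (H,B)_K be a soft group homomorphism such that F(x) = ker f for some x ∈ A. If (f,p) is monic in the category of soft groups, then both f : G → K and p : A → B are injective. -/

import Mathlib

universe u v

/- Monicity is tested against two small soft groups. The kernel of `f`, with an empty
parameter set, admits both its inclusion into `G` and the trivial map, so `f` is injective.
Then `p a = p b` forces `F a = F b`, and the one-parameter soft group `F a`, sent by the
identity to `a` and to `b`, forces `a = b`. -/

theorem MonoidHom.injective_of_cancel_left_on_ker {G K : Type*} [Group G] [Group K]
    (f : G →* K) (h : ∀ f₁ f₂ : f.ker →* G, f.comp f₁ = f.comp f₂ → f₁ = f₂) :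
    Function.Injective f := by
  rw [injective_iff_map_eq_one]
  intro g hg
  have hsub : f.ker.subtype = 1 := h _ _ (by ext ⟨g, hg⟩; simpa using hg)
  simpa using DFunLike.congr_fun hsub ⟨g, hg⟩

theorem soft_group_monic_implies_injective_general
    {G : Type u} {K : Type*} [Group G] [Group K] {A : Type v} {B : Type*}
    (F : A → Subgroup G) (H : B → Subgroup K)
    (f : G →* K) (p : A → B)
    (hfp : ∀ a : A, (F a).map f = H (p a))
    (hmonic : ∀ (M : Type u) (_ : Group M) (C : Type v) (L : C → Subgroup M)
        (f₁ f₂ : M →* G) (p₁ p₂ : C → A),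
        (∀ c : C, (L c).map f₁ = F (p₁ c)) →
        (∀ c : C, (L c).map f₂ = F (p₂ c)) →
        f.comp f₁ = f.comp f₂ → p ∘ p₁ = p ∘ p₂ →
        f₁ = f₂ ∧ p₁ = p₂) :
    Function.Injective f ∧ Function.Injective p := by
  have hf : Function.Injective f := f.injective_of_cancel_left_on_ker fun f₁ f₂ hcomp =>
    (hmonic _ _ PEmpty PEmpty.elim f₁ f₂ PEmpty.elim PEmpty.elim PEmpty.rec PEmpty.rec hcomp
      (funext PEmpty.rec)).1
  refine ⟨hf, fun a b hab => ?_⟩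
  have hF : F a = F b := Subgroup.map_injective hf (by rw [hfp, hfp, hab])
  have hconst := hmonic G inferInstance PUnit (fun _ => F a) (.id G) (.id G) (fun _ => a)
    (fun _ => b) (fun _ => Subgroup.map_id _) (fun _ => by rw [Subgroup.map_id, hF]) rfl
    (funext fun _ => hab)
  exact congrFun hconst.2 PUnit.unit

/-- Let `(f,p) : (F,A)_G → (H,B)_K` be a soft group homomorphism such that
`F(x) = ker f` for some `x ∈ A`. If `(f,p)` is monic in the category of soft groups,
then both `f` and `p` are injective. -/
theorem soft_group_monic_implies_injective
    {G : Type u} {K : Type*} [Group G] [Group K] {A : Type v} {B : Type*}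
    (F : A → Subgroup G) (H : B → Subgroup K)
    (f : G →* K) (p : A → B)
    (hfp : ∀ a : A, (F a).map f = H (p a))
    (hker : ∃ x : A, F x = f.ker)
    (hmonic : ∀ (M : Type u) (_ : Group M) (C : Type v) (L : C → Subgroup M)
        (f₁ f₂ : M →* G) (p₁ p₂ : C → A),
        (∀ c : C, (L c).map f₁ = F (p₁ c)) →
        (∀ c : C, (L c).map f₂ = F (p₂ c)) →
        f.comp f₁ = f.comp f₂ → p ∘ p₁ = p ∘ p₂ →
        f₁ = f₂ ∧ p₁ = p₂) :
    Function.Injective f ∧ Function.Injective p :=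
  soft_group_monic_implies_injective_general F H f p hfp hmonic
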